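/- arXiv:2305.08841 — 6 statements merged into one kernel-verified Lean document; each statement's English description precedes it below -/
import Mathlib

section
/- Let A be a finite nonempty set and Q, Q' : A → ℝ. Define softmax distributions π(a) = exp(Q(a)) / Σ_{a'} exp(Q(a')) and π'(a) = exp(Q'(a)) / Σ_{a'} exp(Q'(a')). Then the ℓ1 distance satisfies Σ_a |π(a) - π'(a)| ≤ 2 * sqrt(sup_a |Q(a) - Q'(a)|). -/
/-!
Let `ε = ‖Q - Q'‖_∞`. Each softmax weight changes by a factor of at most `exp ε` in the numerator
and at most `exp ε` in the normalizer, so the two distributions are pointwise within a factor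
`c = exp (-2ε)` of each other, which gives `Σ_a |π a - π' a| ≤ 2 (1 - c)`. Finally `1 - c ≤ √ε`
follows from `(1 - exp (-x))² ≤ x / 2` at `x = 2ε`; the difference of the two sides vanishes at
`0` and has derivative `2 (exp (-x) - 1/2)² ≥ 0`.
-/

open Real Finset

lemma sq_one_sub_exp_neg_le_half {x : ℝ} (hx : 0 ≤ x) : (1 - exp (-x)) ^ 2 ≤ x / 2 := by
  let f : ℝ → ℝ := fun x => x / 2 - (1 - exp (-x)) ^ 2
  have hf' (x : ℝ) : HasDerivAt f (2 * (exp (-x) - 1 / 2) ^ 2) x :=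
    ((hasDerivAt_id' x).div_const 2).fun_sub ((((hasDerivAt_neg' x).exp).const_sub 1).fun_pow 2)
      |>.congr_deriv (by norm_num; ring)
  have hf_mono : Monotone f :=
    monotone_of_deriv_nonneg (fun x => (hf' x).differentiableAt)
      fun x => (hf' x).deriv ▸ by positivity
  have := hf_mono hx
  simp only [f, neg_zero, exp_zero, sub_self] at this
  linarith

lemma one_sub_exp_neg_le_sqrt {x : ℝ} (hx : 0 ≤ x) : 1 - exp (-x) ≤ √(x / 2) :=
  (le_abs_self _).trans (abs_le_sqrt (sq_one_sub_exp_neg_le_half hx))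

lemma abs_sub_le_of_mul_le {p q c : ℝ} (hp : 0 ≤ p) (hq : 0 ≤ q) (hc : c ≤ 1)
    (hpq : c * p ≤ q) (hqp : c * q ≤ p) : |p - q| ≤ (1 - c) * (p + q) := by
  rw [abs_le]
  constructor <;> nlinarith

section Softmax

variable {A : Type*} [Fintype A]

noncomputable def softmax (Q : A → ℝ) (a : A) : ℝ :=
  exp (Q a) / ∑ b, exp (Q b)

lemma softmax_nonneg (Q : A → ℝ) (a : A) : 0 ≤ softmax Q a := by
  unfold softmax
  positivity

-- Equality holds unless `A` is empty, where the normalizer is `0` and `0 / 0 = 0`.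
lemma sum_softmax_le_one (Q : A → ℝ) : ∑ a, softmax Q a ≤ 1 := by
  simp only [softmax, ← sum_div]
  exact div_self_le_one _

lemma exp_neg_two_mul_mul_softmax_le {Q Q' : A → ℝ} {ε : ℝ} (h : ∀ a, |Q a - Q' a| ≤ ε)
    (a : A) : exp (-(2 * ε)) * softmax Q a ≤ softmax Q' a := by
  have hS : 0 < ∑ b, exp (Q b) := sum_pos (fun b _ => exp_pos _) ⟨a, mem_univ a⟩
  have hS' : 0 < ∑ b, exp (Q' b) := sum_pos (fun b _ => exp_pos _) ⟨a, mem_univ a⟩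
  have hnum : exp (-ε) * exp (Q a) ≤ exp (Q' a) := by
    rw [← exp_add]
    exact exp_le_exp.mpr (by linarith [(abs_le.mp (h a)).2])
  have hden : ∑ b, exp (Q' b) ≤ exp ε * ∑ b, exp (Q b) := by
    rw [mul_sum]
    refine sum_le_sum fun b _ => ?_
    rw [← exp_add]
    exact exp_le_exp.mpr (by linarith [(abs_le.mp (h b)).1])
  calc exp (-(2 * ε)) * softmax Q a
      = exp (-ε) * exp (Q a) / (exp ε * ∑ b, exp (Q b)) := by
        rw [softmax, show -(2 * ε) = -ε - ε by ring, exp_sub]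
        field_simp
    _ ≤ exp (Q' a) / ∑ b, exp (Q' b) := div_le_div₀ (exp_pos _).le hnum hS' hden

end Softmax

theorem softmax_l1_bound_general {A : Type*} [Fintype A] (Q Q' : A → ℝ) :
    ∑ a, |Real.exp (Q a) / ∑ a', Real.exp (Q a') -
          Real.exp (Q' a) / ∑ a', Real.exp (Q' a')| ≤
      2 * Real.sqrt (⨆ a, |Q a - Q' a|) := by
  set ε := ⨆ a, |Q a - Q' a|
  have hε : 0 ≤ ε := Real.iSup_nonneg fun a => abs_nonneg _
  have hQQ' : ∀ a, |Q a - Q' a| ≤ ε := le_ciSup (Set.finite_range _).bddAbove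
  have hQ'Q : ∀ a, |Q' a - Q a| ≤ ε := fun a => abs_sub_comm (Q a) (Q' a) ▸ hQQ' a
  set c := exp (-(2 * ε))
  have hc : c ≤ 1 := exp_le_one_iff.mpr (by linarith)
  have hc_sqrt : 1 - c ≤ √ε := by
    simpa using one_sub_exp_neg_le_sqrt (by positivity : 0 ≤ 2 * ε)
  calc ∑ a, |softmax Q a - softmax Q' a|
      ≤ ∑ a, (1 - c) * (softmax Q a + softmax Q' a) :=
        sum_le_sum fun a _ => abs_sub_le_of_mul_le (softmax_nonneg Q a) (softmax_nonneg Q' a) hc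
          (exp_neg_two_mul_mul_softmax_le hQQ' a) (exp_neg_two_mul_mul_softmax_le hQ'Q a)
    _ = (1 - c) * (∑ a, softmax Q a + ∑ a, softmax Q' a) := by
        rw [← sum_add_distrib, mul_sum]
    _ ≤ (1 - c) * 2 := by
        have := sum_softmax_le_one Q
        have := sum_softmax_le_one Q'
        gcongr
        linarith
    _ ≤ 2 * √ε := by linarith

theorem softmax_l1_bound {A : Type*} [Fintype A] [Nonempty A] (Q Q' : A → ℝ) :
    ∑ a, |Real.exp (Q a) / ∑ a', Real.exp (Q a') -
          Real.exp (Q' a) / ∑ a', Real.exp (Q' a')| ≤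
      2 * Real.sqrt (⨆ a, |Q a - Q' a|) :=
  softmax_l1_bound_general Q Q'
end

section
/- Let A be a finite nonempty set, α > 0, and Q : A → ℝ. Let μ, π be probability distributions on A with π(a) > 0 for all a, and define π'(a) = π(a) * exp(α * Q(a)) / Σ_{a'} π(a') * exp(α * Q(a')). Then α * Σ_a Q(a) * (μ(a) - π'(a)) = KL(μ ‖ π) - KL(μ ‖ π') - KL(π' ‖ π), where KL(p ‖ q) = Σ_a p(a) log(p(a)/q(a)). -/
/-!
Since `π' ∝ π · exp (α Q)`, the log-ratio `log (π' / π)` equals `α Q` up to the additive constant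
`log Z` (the log-normaliser). The KL combination on the right collapses, term by term, to
`∑ (μ - π') · log (π' / π)`, and the constant `log Z` drops out because `μ` and `π'` have the
same total mass.
-/

open Finset

/-- The `0 * log 0 = 0` convention of the paper is Lean's `0 * _ = 0`. -/
noncomputable def discreteKL {A : Type*} [Fintype A] (p q : A → ℝ) : ℝ :=
  ∑ a, p a * Real.log (p a / q a)

noncomputable def expWeights {A : Type*} [Fintype A] (π f : A → ℝ) (a : A) : ℝ :=
  π a * Real.exp (f a) / ∑ b, π b * Real.exp (f b)

lemma mul_log_div_sub_mul_log_div (p : ℝ) {q r : ℝ} (hq : q ≠ 0) (hr : r ≠ 0) :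
    p * Real.log (p / q) - p * Real.log (p / r) = p * Real.log (r / q) := by
  rcases eq_or_ne p 0 with rfl | hp
  · simp
  · rw [Real.log_div hp hq, Real.log_div hp hr, Real.log_div hr hq]
    ring

section

variable {A : Type*} [Fintype A]

theorem discreteKL_sub_discreteKL_sub_discreteKL (μ : A → ℝ) {π π' : A → ℝ}
    (hπ : ∀ a, π a ≠ 0) (hπ' : ∀ a, π' a ≠ 0) :
    discreteKL μ π - discreteKL μ π' - discreteKL π' π =
      ∑ a, (μ a - π' a) * Real.log (π' a / π a) := by
  simp only [discreteKL, ← sum_sub_distrib, sub_mul, mul_log_div_sub_mul_log_div _ (hπ _) (hπ' _)]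

lemma sum_sub_mul_sub_const {μ ν : A → ℝ} (f : A → ℝ) (c : ℝ) (h : ∑ a, μ a = ∑ a, ν a) :
    ∑ a, (μ a - ν a) * (f a - c) = ∑ a, (μ a - ν a) * f a := by
  simp only [mul_sub, sum_sub_distrib, ← sum_mul, h, sub_self, zero_mul, sub_zero]

variable {π : A → ℝ} (f : A → ℝ)

lemma sum_mul_exp_pos [Nonempty A] (hπ : ∀ a, 0 < π a) : 0 < ∑ b, π b * Real.exp (f b) :=
  sum_pos (fun a _ => mul_pos (hπ a) (Real.exp_pos _)) univ_nonempty

lemma expWeights_pos [Nonempty A] (hπ : ∀ a, 0 < π a) (a : A) : 0 < expWeights π f a :=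
  div_pos (mul_pos (hπ a) (Real.exp_pos _)) (sum_mul_exp_pos f hπ)

lemma sum_expWeights [Nonempty A] (hπ : ∀ a, 0 < π a) : ∑ a, expWeights π f a = 1 := by
  simp only [expWeights, ← sum_div, div_self (sum_mul_exp_pos f hπ).ne']

lemma log_expWeights_div [Nonempty A] (hπ : ∀ a, 0 < π a) (a : A) :
    Real.log (expWeights π f a / π a) = f a - Real.log (∑ b, π b * Real.exp (f b)) := by
  rw [expWeights, div_right_comm, mul_div_cancel_left₀ _ (hπ a).ne',
    Real.log_div (Real.exp_pos _).ne' (sum_mul_exp_pos f hπ).ne', Real.log_exp]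

end

theorem exp_weights_kl_identity_general {A : Type*} [Fintype A] [Nonempty A]
    (α : ℝ) (Q : A → ℝ)
    (μ π : A → ℝ) (hμsum : ∑ a, μ a = 1)
    (hπpos : ∀ a, 0 < π a)
    (π' : A → ℝ)
    (hπ' : ∀ a, π' a = π a * Real.exp (α * Q a) / ∑ a', π a' * Real.exp (α * Q a')) :
    α * ∑ a, Q a * (μ a - π' a) =
      (∑ a, μ a * Real.log (μ a / π a)) - (∑ a, μ a * Real.log (μ a / π' a)) -
        ∑ a, π' a * Real.log (π' a / π a) := by
  obtain rfl : π' = expWeights π (α * Q ·) := funext hπ'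
  have hmass : ∑ a, μ a = ∑ a, expWeights π (α * Q ·) a := by
    rw [hμsum, sum_expWeights _ hπpos]
  change _ = discreteKL μ π - discreteKL μ _ - discreteKL _ π
  rw [discreteKL_sub_discreteKL_sub_discreteKL μ (fun a => (hπpos a).ne')
      (fun a => (expWeights_pos _ hπpos a).ne')]
  simp only [log_expWeights_div _ hπpos, sum_sub_mul_sub_const _ _ hmass, mul_sum]
  exact sum_congr rfl fun a _ => by ring

theorem exp_weights_kl_identity {A : Type*} [Fintype A] [Nonempty A]
    (α : ℝ) (hα : 0 < α) (Q : A → ℝ)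
    (μ π : A → ℝ) (hμnonneg : ∀ a, 0 ≤ μ a) (hμsum : ∑ a, μ a = 1)
    (hπpos : ∀ a, 0 < π a) (hπsum : ∑ a, π a = 1)
    (π' : A → ℝ)
    (hπ' : ∀ a, π' a = π a * Real.exp (α * Q a) / ∑ a', π a' * Real.exp (α * Q a')) :
    α * ∑ a, Q a * (μ a - π' a) =
      (∑ a, μ a * Real.log (μ a / π a)) - (∑ a, μ a * Real.log (μ a / π' a)) -
        ∑ a, π' a * Real.log (π' a / π a) :=
  exp_weights_kl_identity_general α Q μ π hμsum hπpos π' hπ'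
end

section
/- Let Λ and Λ' be positive definite d × d real matrices with Λ ⪯ Λ' (i.e., Λ' - Λ is positive semidefinite). Then for every nonzero x ∈ ℝ^d, det(Λ')/det(Λ) ≥ (xᵀ Λ' x)/(xᵀ Λ x). -/
/-!
Write `Λ = Bᵀ B`. Conjugating by `B⁻¹` turns `Λ ⪯ Λ'` into `1 ⪯ A` with `det A = det Λ' / det Λ`.
Then every eigenvalue of `A` is at least `1`, hence at most their product `det A`, so `A ⪯ det A • 1`.
Conjugating back gives `Λ' ⪯ (det Λ' / det Λ) • Λ`, and evaluating both quadratic forms at `x`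
gives the inequality.
-/

open Matrix
open scoped MatrixOrder

namespace Matrix

variable {n : Type*} [Fintype n] [DecidableEq n]

theorem le_det_smul_one_of_one_le {A : Matrix n n ℝ} (hA : 1 ≤ A) : A ≤ A.det • 1 := by
  have hH : A.IsHermitian := by
    simpa using (le_iff.mp hA).isHermitian.add (isHermitian_one (n := n) (α := ℝ))
  have hev : ∀ i, 1 ≤ hH.eigenvalues i := fun i ↦
    (CFC.one_le_iff A).mp hA _ (hH.eigenvalues_mem_spectrum_real i)
  rw [← Algebra.algebraMap_eq_smul_one, le_algebraMap_iff_spectrum_le,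
    hH.spectrum_real_eq_range_eigenvalues]
  rintro _ ⟨i, rfl⟩
  simpa [hH.det_eq_prod_eigenvalues] using
    Finset.prod_mono_set_of_one_le hev (Finset.singleton_subset_iff.mpr (Finset.mem_univ i))

theorem le_det_div_det_smul_of_le {Λ Λ' : Matrix n n ℝ} (hΛ : Λ.PosDef) (hle : Λ ≤ Λ') :
    Λ' ≤ (Λ'.det / Λ.det) • Λ := by
  obtain ⟨B, rfl⟩ := CStarAlgebra.nonneg_iff_eq_star_mul_self.mp hΛ.posSemidef.nonneg
  have hB : IsUnit B.det := (isUnit_iff_isUnit_det B).mp (isUnit_of_mul_isUnit_right hΛ.isUnit)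
  have hBC : B * B⁻¹ = 1 := mul_nonsing_inv B hB
  have hCB : B⁻¹ * B = 1 := nonsing_inv_mul B hB
  set A := star B⁻¹ * Λ' * B⁻¹
  have hconj : star B * A * B = Λ' := by
    simp only [A, ← mul_assoc, ← star_mul, hCB, star_one, one_mul]
    rw [mul_assoc, hCB, mul_one]
  have hA : 1 ≤ A := by
    simpa only [← mul_assoc, ← star_mul, hBC, star_one, one_mul]
      using star_left_conjugate_le_conjugate hle B⁻¹
  clear_value A
  have hdet : A.det = Λ'.det / (star B * B).det := by
    rw [eq_div_iff hΛ.det_pos.ne', ← hconj, det_mul, det_mul, det_mul]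
    ring
  calc Λ' = star B * A * B := hconj.symm
    _ ≤ star B * (A.det • 1) * B :=
      star_left_conjugate_le_conjugate (le_det_smul_one_of_one_le hA) _
    _ = (Λ'.det / (star B * B).det) • (star B * B) := by simp [hdet]

end Matrix

theorem det_ratio_ge_quadratic_ratio_general (d : ℕ)
    (Λ Λ' : Matrix (Fin d) (Fin d) ℝ)
    (hΛ : Λ.PosDef) (hle : (Λ' - Λ).PosSemidef)
    (x : Fin d → ℝ) :
    (x ⬝ᵥ Λ' *ᵥ x) / (x ⬝ᵥ Λ *ᵥ x) ≤ Λ'.det / Λ.det := by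
  have hΛΛ' : Λ ≤ Λ' := le_iff.mpr hle
  have hbound : Λ' ≤ (Λ'.det / Λ.det) • Λ := le_det_div_det_smul_of_le hΛ hΛΛ'
  have hratio : 0 ≤ Λ'.det / Λ.det :=
    div_nonneg (hΛ.posSemidef.nonneg.trans hΛΛ').posSemidef.det_nonneg hΛ.det_pos.le
  refine div_le_of_le_mul₀ (by simpa using hΛ.posSemidef.dotProduct_mulVec_nonneg x) hratio ?_
  simpa [sub_mulVec, smul_mulVec] using (le_iff.mp hbound).dotProduct_mulVec_nonneg x

theorem det_ratio_ge_quadratic_ratio (d : ℕ)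
    (Λ Λ' : Matrix (Fin d) (Fin d) ℝ)
    (hΛ : Λ.PosDef) (hΛ' : Λ'.PosDef) (hle : (Λ' - Λ).PosSemidef)
    (x : Fin d → ℝ) (hx : x ≠ 0) :
    (x ⬝ᵥ Λ' *ᵥ x) / (x ⬝ᵥ Λ *ᵥ x) ≤ Λ'.det / Λ.det :=
  det_ratio_ge_quadratic_ratio_general d Λ Λ' hΛ hle x
end

section
/- Let {φ_t}_{t≥1} ⊂ ℝ^d with ‖φ_t‖_2 ≤ 1, let Λ_0 be positive definite with λ_min(Λ_0) ≥ 1, and Λ_t = Λ_0 + Σ_{i=1}^{t-1} φ_i φ_iᵀ. Then for every t, log(det(Λ_{t+1})/det(Λ_1)) ≤ Σ_{i=1}^t φ_iᵀ Λ_i^{-1} φ_i ≤ 2 log(det(Λ_{t+1})/det(Λ_1)). -/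
/-!
By the matrix determinant lemma, `det Λ_{i+1} = det Λ_i * (1 + u_i)` with
`u_i = φ_iᵀ Λ_i⁻¹ φ_i`, so `log (det Λ_t / det Λ_0)` telescopes to `∑_{i<t} log (1 + u_i)`.
The two bounds then hold term by term: `log (1 + u) ≤ u` always, and `u ≤ 2 log (1 + u)`
because `Λ_i ≥ 1` forces `u_i ≤ ‖φ_i‖² ≤ 1`.
-/

open Matrix

namespace Real

theorem le_two_mul_log_one_add {u : ℝ} (h0 : 0 ≤ u) (h2 : u ≤ 2) : u ≤ 2 * log (1 + u) :=
  calc u ≤ 2 * (2 * u / (u + 2)) := by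
        rw [mul_div_assoc', le_div_iff₀ (by linarith)]
        nlinarith
    _ ≤ 2 * log (1 + u) := by gcongr; exact le_log_one_add_of_nonneg h0

end Real

namespace Matrix

variable {n : Type*} [Fintype n]

theorem det_add_vecMulVec [DecidableEq n] {R : Type*} [CommRing R] {A : Matrix n n R} (hA : IsUnit A.det)
    (u v : n → R) : (A + vecMulVec u v).det = A.det * (1 + v ⬝ᵥ A⁻¹ *ᵥ u) := by
  rw [vecMulVec_eq Unit, det_add_replicateCol_mul_replicateRow hA, Matrix.mul_assoc,
    ← replicateCol_mulVec, replicateRow_mul_replicateCol]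
  simp [det_unique]

theorem posSemidef_sum_vecMulVec_self {ι : Type*} (s : Finset ι) (φ : ι → n → ℝ) :
    (∑ i ∈ s, vecMulVec (φ i) (φ i)).PosSemidef :=
  posSemidef_sum s fun i _ => by simpa using posSemidef_vecMulVec_self_star (φ i)

theorem dotProduct_inv_mulVec_le_dotProduct_self [DecidableEq n] {A : Matrix n n ℝ} (hA : IsUnit A.det)
    (hA1 : (A - 1).PosSemidef) (v : n → ℝ) : v ⬝ᵥ A⁻¹ *ᵥ v ≤ v ⬝ᵥ v := by
  set ψ := A⁻¹ *ᵥ v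
  have hAψ : A *ᵥ ψ = v := by rw [mulVec_mulVec, mul_nonsing_inv _ hA, one_mulVec]
  have hψ : ψ ⬝ᵥ ψ ≤ ψ ⬝ᵥ v := by
    simpa [sub_mulVec, hAψ] using hA1.dotProduct_mulVec_nonneg ψ
  -- complete the square: `v ⬝ᵥ v ≥ 2 v ⬝ᵥ ψ - ψ ⬝ᵥ ψ ≥ v ⬝ᵥ ψ`
  have hsq : 0 ≤ (v - ψ) ⬝ᵥ (v - ψ) := by simpa using dotProduct_self_star_nonneg (v - ψ)
  simp only [sub_dotProduct, dotProduct_sub, dotProduct_comm ψ v] at hsq hψ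
  linarith

theorem log_det_div_eq_sum_log_one_add [DecidableEq n] {Λ : ℕ → Matrix n n ℝ} {φ : ℕ → n → ℝ}
    (hdet : ∀ t, 0 < (Λ t).det) (hsucc : ∀ t, Λ (t + 1) = Λ t + vecMulVec (φ t) (φ t))
    (t : ℕ) :
    Real.log ((Λ t).det / (Λ 0).det) =
      ∑ i ∈ Finset.range t, Real.log (1 + φ i ⬝ᵥ (Λ i)⁻¹ *ᵥ φ i) := by
  have hratio : ∀ i, 1 + φ i ⬝ᵥ (Λ i)⁻¹ *ᵥ φ i = (Λ (i + 1)).det / (Λ i).det := fun i => by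
    rw [hsucc, det_add_vecMulVec (hdet i).ne'.isUnit, mul_div_cancel_left₀ _ (hdet i).ne']
  simp_rw [hratio, Real.log_div (hdet _).ne' (hdet _).ne']
  exact (Finset.sum_range_sub (fun i => Real.log (Λ i).det) t).symm

end Matrix

theorem elliptical_potential (d : ℕ) (φ : ℕ → Fin d → ℝ)
    (hφ : ∀ t, Real.sqrt (∑ i, φ t i ^ 2) ≤ 1)
    (Λ₀ : Matrix (Fin d) (Fin d) ℝ) (hΛ₀ : Λ₀.PosDef)
    (hmin : (Λ₀ - (1 : Matrix (Fin d) (Fin d) ℝ)).PosSemidef)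
    (Λ : ℕ → Matrix (Fin d) (Fin d) ℝ)
    (hΛ : ∀ t, Λ t = Λ₀ + ∑ i ∈ Finset.range t, vecMulVec (φ i) (φ i)) :
    ∀ t : ℕ,
      Real.log ((Λ t).det / (Λ 0).det) ≤
          ∑ i ∈ Finset.range t, φ i ⬝ᵥ (Λ i)⁻¹ *ᵥ φ i ∧
        ∑ i ∈ Finset.range t, φ i ⬝ᵥ (Λ i)⁻¹ *ᵥ φ i ≤
          2 * Real.log ((Λ t).det / (Λ 0).det) := by
  have hpos (t : ℕ) : (Λ t).PosDef :=
    hΛ t ▸ hΛ₀.add_posSemidef (posSemidef_sum_vecMulVec_self _ φ)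
  have hsucc (t : ℕ) : Λ (t + 1) = Λ t + vecMulVec (φ t) (φ t) := by
    rw [hΛ, hΛ, Finset.sum_range_succ, add_assoc]
  have hu0 (i : ℕ) : 0 ≤ φ i ⬝ᵥ (Λ i)⁻¹ *ᵥ φ i := by
    simpa using (hpos i).inv.posSemidef.dotProduct_mulVec_nonneg (φ i)
  have hu1 (i : ℕ) : φ i ⬝ᵥ (Λ i)⁻¹ *ᵥ φ i ≤ 1 := by
    have hΛ1 : (Λ i - 1).PosSemidef := by
      rw [hΛ, add_sub_right_comm]
      exact hmin.add (posSemidef_sum_vecMulVec_self _ φ)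
    refine (dotProduct_inv_mulVec_le_dotProduct_self (hpos i).det_pos.ne'.isUnit hΛ1 _).trans ?_
    simpa [dotProduct, sq] using hφ i
  intro t
  rw [log_det_div_eq_sum_log_one_add (fun t => (hpos t).det_pos) hsucc, Finset.mul_sum]
  refine ⟨Finset.sum_le_sum fun i _ => ?_, Finset.sum_le_sum fun i _ => ?_⟩
  · linarith [Real.log_le_sub_one_of_pos (by linarith [hu0 i] : 0 < 1 + φ i ⬝ᵥ (Λ i)⁻¹ *ᵥ φ i)]
  · exact Real.le_two_mul_log_one_add (hu0 i) (by linarith [hu1 i])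
end

section
/- Let λ > 0 and let φ_1,…,φ_K ∈ ℝ^d with ‖φ_τ‖_2 ≤ 1. Define Λ = λ I_d + Σ_{τ=1}^{K} φ_τ φ_τᵀ. Let H > 0 and v_1,…,v_K ∈ ℝ with |v_τ| ≤ H, and w = Λ^{-1} Σ_{τ=1}^K φ_τ v_τ. Then ‖w‖_2 ≤ H sqrt(d K / λ). -/
/-!
Pairing `Λ w = ∑ τ, v τ • φ τ` with `w` gives the energy identity
`λ ‖w‖² + ∑ τ, (φ τ ⬝ᵥ w)² = ∑ τ, v τ (φ τ ⬝ᵥ w)`, and the AM-GM bound `v t - t² ≤ v² / 4`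
turns it into `λ ‖w‖² ≤ K H² / 4`, which is at most `d K H²` once `d ≥ 1`.
-/

open Matrix

section Ridge

variable {n ι : Type*} [Fintype n] [DecidableEq n] [Fintype ι]

def ridgeMatrix (lam : ℝ) (φ : ι → n → ℝ) : Matrix n n ℝ :=
  lam • 1 + ∑ τ, vecMulVec (φ τ) (φ τ)

theorem posDef_ridgeMatrix {lam : ℝ} (hlam : 0 < lam) (φ : ι → n → ℝ) :
    (ridgeMatrix lam φ).PosDef :=
  (PosDef.one.smul hlam).add_posSemidef <|
    posSemidef_sum _ fun τ _ => by simpa using posSemidef_vecMulVec_self_star (φ τ)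

theorem dotProduct_ridgeMatrix_mulVec (lam : ℝ) (φ : ι → n → ℝ) (x : n → ℝ) :
    x ⬝ᵥ (ridgeMatrix lam φ *ᵥ x) = lam * (x ⬝ᵥ x) + ∑ τ, (φ τ ⬝ᵥ x) ^ 2 := by
  simp only [ridgeMatrix, add_mulVec, smul_mulVec, one_mulVec, sum_mulVec, vecMulVec_mulVec,
    dotProduct_add, dotProduct_smul, dotProduct_sum, smul_eq_mul, op_smul_eq_smul]
  congr 1
  refine Finset.sum_congr rfl fun τ _ => ?_
  rw [dotProduct_comm, sq]

theorem ridgeMatrix_mulVec_nonsing_inv_mulVec {lam : ℝ} (hlam : 0 < lam) (φ : ι → n → ℝ)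
    (b : n → ℝ) : ridgeMatrix lam φ *ᵥ ((ridgeMatrix lam φ)⁻¹ *ᵥ b) = b := by
  have hdet := (isUnit_iff_isUnit_det _).mp (posDef_ridgeMatrix hlam φ).isUnit
  rw [mulVec_mulVec, mul_nonsing_inv _ hdet, one_mulVec]

theorem mul_dotProduct_self_le_of_ridgeMatrix_mulVec {lam : ℝ} {φ : ι → n → ℝ} {v : ι → ℝ}
    {w : n → ℝ} (hw : ridgeMatrix lam φ *ᵥ w = ∑ τ, v τ • φ τ) :
    lam * (w ⬝ᵥ w) ≤ ∑ τ, v τ ^ 2 / 4 := by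
  have energy : lam * (w ⬝ᵥ w) + ∑ τ, (φ τ ⬝ᵥ w) ^ 2 = ∑ τ, v τ * (φ τ ⬝ᵥ w) := by
    rw [← dotProduct_ridgeMatrix_mulVec, hw, dotProduct_sum]
    exact Finset.sum_congr rfl fun τ _ => by rw [dotProduct_smul, smul_eq_mul, dotProduct_comm]
  have amgm : ∀ τ, v τ * (φ τ ⬝ᵥ w) ≤ v τ ^ 2 / 4 + (φ τ ⬝ᵥ w) ^ 2 := fun τ => by
    nlinarith [sq_nonneg (φ τ ⬝ᵥ w - v τ / 2)]
  have hsum := Finset.sum_le_sum fun τ (_ : τ ∈ Finset.univ) => amgm τ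
  rw [Finset.sum_add_distrib] at hsum
  linarith

theorem dotProduct_self_le_of_ridgeMatrix_mulVec {lam H : ℝ} (hlam : 0 < lam) {φ : ι → n → ℝ}
    {v : ι → ℝ} (hv : ∀ τ, |v τ| ≤ H) {w : n → ℝ}
    (hw : ridgeMatrix lam φ *ᵥ w = ∑ τ, v τ • φ τ) :
    w ⬝ᵥ w ≤ Fintype.card ι * H ^ 2 / (4 * lam) := by
  have hv_sq : ∑ τ, v τ ^ 2 / 4 ≤ Fintype.card ι * (H ^ 2 / 4) := by
    simpa using Finset.sum_le_sum fun τ (_ : τ ∈ Finset.univ) =>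
      div_le_div_of_nonneg_right (sq_le_sq' (abs_le.mp (hv τ)).1 (abs_le.mp (hv τ)).2) zero_le_four
  rw [le_div_iff₀ (by positivity)]
  nlinarith [mul_dotProduct_self_le_of_ridgeMatrix_mulVec hw]

end Ridge

theorem ridge_coefficient_bound_general (d K : ℕ) (lam H : ℝ) (hlam : 0 < lam) (hH : 0 < H)
    (φ : Fin K → Fin d → ℝ)
    (v : Fin K → ℝ) (hv : ∀ τ, |v τ| ≤ H)
    (w : Fin d → ℝ)
    (hw : w = (lam • (1 : Matrix (Fin d) (Fin d) ℝ) +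
        ∑ τ, vecMulVec (φ τ) (φ τ))⁻¹ *ᵥ ∑ τ, v τ • φ τ) :
    Real.sqrt (∑ i, w i ^ 2) ≤ H * Real.sqrt (d * K / lam) := by
  obtain rfl | hd := Nat.eq_zero_or_pos d
  · simp only [Finset.univ_eq_empty, Finset.sum_empty, Real.sqrt_zero]
    positivity
  have hΛw : ridgeMatrix lam φ *ᵥ w = ∑ τ, v τ • φ τ :=
    hw ▸ ridgeMatrix_mulVec_nonsing_inv_mulVec hlam φ _
  have hw_sq : ∑ i, w i ^ 2 ≤ H ^ 2 * (d * K / lam) := calc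
    ∑ i, w i ^ 2 = w ⬝ᵥ w := by simp only [dotProduct, sq]
    _ ≤ K * H ^ 2 / (4 * lam) := by
      simpa using dotProduct_self_le_of_ridgeMatrix_mulVec hlam hv hΛw
    _ ≤ H ^ 2 * (d * K / lam) := by
      have hd_one : (1 : ℝ) ≤ d := by exact_mod_cast hd
      rw [mul_div_assoc', div_le_div_iff₀ (by positivity) hlam]
      nlinarith [mul_nonneg (mul_nonneg (Nat.cast_nonneg K : (0:ℝ) ≤ K) (sq_nonneg H)) hlam.le]
  calc Real.sqrt (∑ i, w i ^ 2) ≤ Real.sqrt (H ^ 2 * (d * K / lam)) := Real.sqrt_le_sqrt hw_sq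
    _ = H * Real.sqrt (d * K / lam) := by rw [Real.sqrt_mul (sq_nonneg H), Real.sqrt_sq hH.le]

theorem ridge_coefficient_bound (d K : ℕ) (lam H : ℝ) (hlam : 0 < lam) (hH : 0 < H)
    (φ : Fin K → Fin d → ℝ) (hφ : ∀ τ, Real.sqrt (∑ i, φ τ i ^ 2) ≤ 1)
    (v : Fin K → ℝ) (hv : ∀ τ, |v τ| ≤ H)
    (w : Fin d → ℝ)
    (hw : w = (lam • (1 : Matrix (Fin d) (Fin d) ℝ) +
        ∑ τ, vecMulVec (φ τ) (φ τ))⁻¹ *ᵥ ∑ τ, v τ • φ τ) :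
    Real.sqrt (∑ i, w i ^ 2) ≤ H * Real.sqrt (d * K / lam) :=
  ridge_coefficient_bound_general d K lam H hlam hH φ v hv w hw
end

section
/- Let H > 0, λ > 0, β > 0 and let f, g : X → ℝ on a set X satisfy |f(z) - g(z)| ≤ Γ(z) for all z ∈ X, where Γ : X → ℝ≥0, and suppose 0 ≤ f(z) ≤ H for all z. Define ĝ(z) = min{ max{0, g(z) + Γ(z)}, H }. Then for all z ∈ X: -2 min{H, Γ(z)} ≤ f(z) - ĝ(z) ≤ 0. -/
/-! Since `|f - g| ≤ Γ`, the optimistic value `g + Γ` lies in `[f, f + 2Γ]`. Clipping it to `[0, H]`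
keeps it above `f`, because `f` already lies in `[0, H]`. The clipped value exceeds `f` by at most `2Γ`,
because `f + 2Γ ≥ 0` is not affected by clipping at `0`, and by at most `H`, because both lie in
`[0, H]`; finally `min H (2Γ) ≤ 2 min H Γ`. -/

theorem min_max_zero_sub_le_min {α : Type*} [AddCommGroup α] [LinearOrder α]
    [IsOrderedAddMonoid α] {x t d H : α} (hx : 0 ≤ x) (hd : 0 ≤ d) (ht : t ≤ x + d) :
    min (max 0 t) H - x ≤ min H d := by
  refine le_min ?_ ?_
  · calc min (max 0 t) H - x ≤ H - x := sub_le_sub_right (min_le_right _ _) x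
      _ ≤ H := sub_le_self H hx
  · rw [sub_le_iff_le_add']
    exact (min_le_left _ _).trans (max_le (add_nonneg hx hd) ht)

theorem min_two_mul_le_two_mul_min {α : Type*} [Semiring α] [LinearOrder α] [IsOrderedRing α]
    {a b : α} (ha : 0 ≤ a) : min a (2 * b) ≤ 2 * min a b := by
  rw [mul_min_of_nonneg _ _ zero_le_two, two_mul a]
  exact min_le_min_right _ (le_add_of_nonneg_left ha)

theorem optimism_truncation_general {X : Type*} (H : ℝ)
    (f g : X → ℝ) (Γ : X → ℝ)
    (hfg : ∀ z, |f z - g z| ≤ Γ z) (hf : ∀ z, 0 ≤ f z ∧ f z ≤ H) :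
    ∀ z, -2 * min H (Γ z) ≤ f z - min (max 0 (g z + Γ z)) H ∧
      f z - min (max 0 (g z + Γ z)) H ≤ 0 := by
  intro z
  obtain ⟨hf0, hfH⟩ := hf z
  obtain ⟨hfg_le, hgf_le⟩ := abs_sub_le_iff.mp (hfg z)
  have hΓ : 0 ≤ Γ z := (abs_nonneg _).trans (hfg z)
  have hupper : min (max 0 (g z + Γ z)) H - f z ≤ 2 * min H (Γ z) :=
    (min_max_zero_sub_le_min hf0 (by positivity) (by linarith)).trans
      (min_two_mul_le_two_mul_min (hf0.trans hfH))
  have hlower : f z ≤ min (max 0 (g z + Γ z)) H :=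
    le_min (le_max_of_le_right (by linarith)) hfH
  constructor <;> linarith

theorem optimism_truncation {X : Type*} (H : ℝ) (hH : 0 < H)
    (f g : X → ℝ) (Γ : X → ℝ) (hΓ : ∀ z, 0 ≤ Γ z)
    (hfg : ∀ z, |f z - g z| ≤ Γ z) (hf : ∀ z, 0 ≤ f z ∧ f z ≤ H) :
    ∀ z, -2 * min H (Γ z) ≤ f z - min (max 0 (g z + Γ z)) H ∧
      f z - min (max 0 (g z + Γ z)) H ≤ 0 :=
  optimism_truncation_general H f g Γ hfg hf
end
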